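/- arXiv:1611.09166 — 2 statements merged into one kernel-verified Lean document; each statement's English description precedes it below -/
import Mathlib

section
/- The homoclinic group H_P(T) is a full group: if S ∈ H_P(T) and R is a measure-preserving transformation such that R(x) = S^{n(x)}(x) for a measurable integer-valued function n, and R is invertible, then R ∈ H_P(T). -/
open MeasureTheory Filter Topology

variable {X : Type*} [MeasurableSpace X]

/-- The conjugate `T^{-n} S T^n` of `S` by the `n`-th power of `T` (with inverse `Tinv`),
as a point map. -/
def conjMap (T Tinv S : X → X) (n : ℕ) : X → X :=
  fun x => Tinv^[n] (S (T^[n] x))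

/-- `S` is homoclinic for `T` along the filter `L` : the Koopman operators of
`T^{-n} S T^n` converge strongly to the identity on `L²(X, μ)` along `L`. -/
def HomoclinicAlong (μ : Measure X) (T Tinv S : X → X) (L : Filter ℕ) : Prop :=
  ∀ f : X → ℝ, MemLp f 2 μ →
    Tendsto (fun n => eLpNorm (fun x => f (conjMap T Tinv S n x) - f x) 2 μ) L (𝓝 0)

/-- `S` is an invertible measure-preserving transformation of `(X, μ)`. -/
def InvMP (μ : Measure X) (S : X → X) : Prop :=
  MeasurePreserving S μ μ ∧
    ∃ Sinv : X → X, MeasurePreserving Sinv μ μ ∧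
      Function.LeftInverse Sinv S ∧ Function.RightInverse Sinv S

/-- The `n`-th power `S^n` (for `n : ℤ`) of an invertible transformation `S` with
inverse `Sinv`. -/
def zIter (S Sinv : X → X) (n : ℤ) (x : X) : X :=
  if 0 ≤ n then S^[n.toNat] x else Sinv^[(-n).toNat] x

/-!
Conjugation by `T^k` respects composition and inverses, so every power `S^j` is homoclinic
along with `S`. For a bounded `g`, sort the points by `j = n (T^k x)`: where `|j| ≤ M`, the
conjugate `T^{-k} R T^k` agrees with `T^{-k} S^j T^k`, which leaves finitely many terms tending
to `0`; the remaining points form `T^{-k} {|n| > M}`, whose measure does not depend on `k` and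
on which `g ∘ T^{-k} R T^k - g` is bounded by `2 sup ‖g‖`. All conjugates preserve `μ`, so the
convergence passes from simple functions to all of `L²` by density.
-/

open scoped ENNReal

theorem ENNReal.tendsto_nhds_zero_of_le_add {β ι : Type*} {L : Filter ι} {a : ι → ℝ≥0∞}
    {b : β → ℝ≥0∞} {c : β → ι → ℝ≥0∞} (hb : ∀ ε > 0, ∃ i, b i < ε)
    (hc : ∀ i, Tendsto (c i) L (𝓝 0)) (hle : ∀ i k, a k ≤ b i + c i k) :
    Tendsto a L (𝓝 0) := by
  refine ENNReal.tendsto_nhds_zero.2 fun ε hε => ?_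
  have hε2 : 0 < ε / 2 := ENNReal.half_pos hε.ne'
  obtain ⟨i, hi⟩ := hb _ hε2
  filter_upwards [ENNReal.tendsto_nhds_zero.1 (hc i) _ hε2] with k hk
  calc a k ≤ b i + c i k := hle i k
    _ ≤ ε / 2 + ε / 2 := add_le_add hi.le hk
    _ = ε := ENNReal.add_halves ε

section Displacement

variable {μ : Measure X} {p : ℝ≥0∞} {E : Type*} [NormedAddCommGroup E]

theorem eLpNorm_comp_sub_le_two_mul_add {C : X → X} (hC : MeasurePreserving C μ μ)
    {f g : X → E} (hf : AEStronglyMeasurable f μ) (hg : AEStronglyMeasurable g μ) (hp : 1 ≤ p) :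
    eLpNorm (fun x => f (C x) - f x) p μ ≤
      2 * eLpNorm (f - g) p μ + eLpNorm (fun x => g (C x) - g x) p μ := by
  have hfg : AEStronglyMeasurable (f - g) μ := hf.sub hg
  have hsplit : (fun x => f (C x) - f x) = ((f - g) ∘ C - (f - g)) + fun x => g (C x) - g x := by
    funext x
    simp only [Pi.add_apply, Pi.sub_apply, Function.comp_apply]
    abel
  calc eLpNorm (fun x => f (C x) - f x) p μ
      ≤ eLpNorm ((f - g) ∘ C - (f - g)) p μ + eLpNorm (fun x => g (C x) - g x) p μ := by
        rw [hsplit]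
        exact eLpNorm_add_le ((hfg.comp_measurePreserving hC).sub hfg)
          ((hg.comp_measurePreserving hC).sub hg) hp
    _ ≤ eLpNorm ((f - g) ∘ C) p μ + eLpNorm (f - g) p μ +
          eLpNorm (fun x => g (C x) - g x) p μ := by
        gcongr
        exact eLpNorm_sub_le (hfg.comp_measurePreserving hC) hfg hp
    _ = 2 * eLpNorm (f - g) p μ + eLpNorm (fun x => g (C x) - g x) p μ := by
        rw [eLpNorm_comp_measurePreserving hfg hC, two_mul]

theorem eLpNorm_comp_comp_sub_le {A B : X → X} (hA : MeasurePreserving A μ μ)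
    (hB : MeasurePreserving B μ μ) {g : X → E} (hg : AEStronglyMeasurable g μ) (hp : 1 ≤ p) :
    eLpNorm (fun x => g (A (B x)) - g x) p μ ≤
      eLpNorm (fun x => g (A x) - g x) p μ + eLpNorm (fun x => g (B x) - g x) p μ := by
  have hgA : AEStronglyMeasurable (fun x => g (A x) - g x) μ :=
    (hg.comp_measurePreserving hA).sub hg
  calc eLpNorm (fun x => g (A (B x)) - g x) p μ
      = eLpNorm ((fun x => g (A x) - g x) ∘ B + fun x => g (B x) - g x) p μ := by
        congr 1
        funext x
        simp only [Pi.add_apply, Function.comp_apply, sub_add_sub_cancel]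
    _ ≤ eLpNorm ((fun x => g (A x) - g x) ∘ B) p μ + eLpNorm (fun x => g (B x) - g x) p μ :=
        eLpNorm_add_le (hgA.comp_measurePreserving hB) ((hg.comp_measurePreserving hB).sub hg) hp
    _ = eLpNorm (fun x => g (A x) - g x) p μ + eLpNorm (fun x => g (B x) - g x) p μ := by
        rw [eLpNorm_comp_measurePreserving hgA hB]

theorem eLpNorm_comp_sub_eq_of_leftInverse {A B : X → X} (hA : MeasurePreserving A μ μ)
    (hB : MeasurePreserving B μ μ) (hAB : Function.LeftInverse A B) {g : X → E}
    (hg : AEStronglyMeasurable g μ) :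
    eLpNorm (fun x => g (A x) - g x) p μ = eLpNorm (fun x => g (B x) - g x) p μ := by
  have hgA : AEStronglyMeasurable (fun x => g (A x) - g x) μ :=
    (hg.comp_measurePreserving hA).sub hg
  rw [← eLpNorm_comp_measurePreserving hgA hB, ← eLpNorm_neg]
  congr 1
  funext x
  simp only [Function.comp_apply, Pi.neg_apply, hAB x, neg_sub]

end Displacement

section Conjugation

variable {Y : Type*} {T Tinv : Y → Y}

theorem conjMap_id (hTl : Function.LeftInverse Tinv T) (k : ℕ) : conjMap T Tinv id k = id :=
  funext (hTl.iterate k)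

theorem conjMap_comp (hTr : Function.RightInverse Tinv T) (A B : Y → Y) (k : ℕ) :
    conjMap T Tinv (A ∘ B) k = conjMap T Tinv A k ∘ conjMap T Tinv B k := by
  funext x
  simp only [conjMap, Function.comp_apply, hTr.iterate k _]

theorem zIter_of_nonneg {S Sinv : Y → Y} {j : ℤ} (hj : 0 ≤ j) : zIter S Sinv j = S^[j.toNat] :=
  funext fun _ => if_pos hj

theorem zIter_of_neg {S Sinv : Y → Y} {j : ℤ} (hj : j < 0) : zIter S Sinv j = Sinv^[(-j).toNat] :=
  funext fun _ => if_neg hj.not_ge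

end Conjugation

section Homoclinic

variable {μ : Measure X} {T Tinv S Sinv : X → X} {L : Filter ℕ}

theorem measurePreserving_conjMap (hT : MeasurePreserving T μ μ)
    (hTinv : MeasurePreserving Tinv μ μ) (hS : MeasurePreserving S μ μ) (k : ℕ) :
    MeasurePreserving (conjMap T Tinv S k) μ μ :=
  (hTinv.iterate k).comp (hS.comp (hT.iterate k))

theorem measurePreserving_zIter (hS : MeasurePreserving S μ μ)
    (hSinv : MeasurePreserving Sinv μ μ) (j : ℤ) : MeasurePreserving (zIter S Sinv j) μ μ := by
  rcases le_or_gt 0 j with hj | hj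
  · exact zIter_of_nonneg hj ▸ hS.iterate j.toNat
  · exact zIter_of_neg hj ▸ hSinv.iterate (-j).toNat

theorem homoclinicAlong_id (hTl : Function.LeftInverse Tinv T) :
    HomoclinicAlong μ T Tinv id L := fun f _ => by
  simpa [conjMap_id hTl] using tendsto_const_nhds

theorem HomoclinicAlong.comp (hT : MeasurePreserving T μ μ) (hTinv : MeasurePreserving Tinv μ μ)
    (hTr : Function.RightInverse Tinv T) {A B : X → X} (hA : MeasurePreserving A μ μ)
    (hB : MeasurePreserving B μ μ) (hAH : HomoclinicAlong μ T Tinv A L)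
    (hBH : HomoclinicAlong μ T Tinv B L) : HomoclinicAlong μ T Tinv (A ∘ B) L := fun f hf => by
  refine tendsto_of_tendsto_of_tendsto_of_le_of_le tendsto_const_nhds
    (by simpa using (hAH f hf).add (hBH f hf)) (fun _ => zero_le) fun k => ?_
  rw [conjMap_comp hTr]
  exact eLpNorm_comp_comp_sub_le (measurePreserving_conjMap hT hTinv hA k)
    (measurePreserving_conjMap hT hTinv hB k) hf.1 one_le_two

theorem HomoclinicAlong.iterate (hT : MeasurePreserving T μ μ)
    (hTinv : MeasurePreserving Tinv μ μ) (hTl : Function.LeftInverse Tinv T)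
    (hTr : Function.RightInverse Tinv T) (hS : MeasurePreserving S μ μ)
    (hSH : HomoclinicAlong μ T Tinv S L) (m : ℕ) : HomoclinicAlong μ T Tinv S^[m] L := by
  induction m with
  | zero => exact homoclinicAlong_id hTl
  | succ m ih =>
    rw [Function.iterate_succ']
    exact hSH.comp hT hTinv hTr hS (hS.iterate m) ih

theorem HomoclinicAlong.of_leftInverse (hT : MeasurePreserving T μ μ)
    (hTinv : MeasurePreserving Tinv μ μ) (hTl : Function.LeftInverse Tinv T)
    (hTr : Function.RightInverse Tinv T) (hS : MeasurePreserving S μ μ)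
    (hSinv : MeasurePreserving Sinv μ μ) (hSl : Function.LeftInverse Sinv S)
    (hSH : HomoclinicAlong μ T Tinv S L) : HomoclinicAlong μ T Tinv Sinv L := fun f hf => by
  refine (hSH f hf).congr fun k => (eLpNorm_comp_sub_eq_of_leftInverse
    (measurePreserving_conjMap hT hTinv hSinv k) (measurePreserving_conjMap hT hTinv hS k)
    ?_ hf.1).symm
  rw [Function.leftInverse_iff_comp, ← conjMap_comp hTr, hSl.comp_eq_id, conjMap_id hTl]

theorem HomoclinicAlong.zIter (hT : MeasurePreserving T μ μ)
    (hTinv : MeasurePreserving Tinv μ μ) (hTl : Function.LeftInverse Tinv T)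
    (hTr : Function.RightInverse Tinv T) (hS : MeasurePreserving S μ μ)
    (hSinv : MeasurePreserving Sinv μ μ) (hSl : Function.LeftInverse Sinv S)
    (hSH : HomoclinicAlong μ T Tinv S L) (j : ℤ) :
    HomoclinicAlong μ T Tinv (zIter S Sinv j) L := by
  rcases le_or_gt 0 j with hj | hj
  · exact zIter_of_nonneg hj ▸ hSH.iterate hT hTinv hTl hTr hS j.toNat
  · exact zIter_of_neg hj ▸
      (hSH.of_leftInverse hT hTinv hTl hTr hS hSinv hSl).iterate hT hTinv hTl hTr hSinv
        (-j).toNat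

end Homoclinic

section Gluing

variable {μ : Measure X} {p : ℝ≥0∞} {E : Type*} [NormedAddCommGroup E]

theorem norm_sub_le_indicator_add_sum {Y : Type*} {g : Y → E} {C : ℝ} (hgC : ∀ x, ‖g x‖ ≤ C)
    {A : Y → Y} {V : ℤ → Y → Y} {m : Y → ℤ} (hAV : ∀ x, A x = V (m x) x) (M : ℕ) (x : Y) :
    ‖g (A x) - g x‖ ≤ {x | (M : ℤ) < |m x|}.indicator (fun _ => 2 * C) x +
      ∑ j ∈ Finset.Icc (-(M : ℤ)) M, ‖g (V j x) - g x‖ := by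
  have hsum : 0 ≤ ∑ j ∈ Finset.Icc (-(M : ℤ)) M, ‖g (V j x) - g x‖ :=
    Finset.sum_nonneg fun _ _ => norm_nonneg _
  by_cases hx : (M : ℤ) < |m x|
  · rw [Set.indicator_of_mem (show x ∈ {x | (M : ℤ) < |m x|} from hx)]
    calc ‖g (A x) - g x‖ ≤ ‖g (A x)‖ + ‖g x‖ := norm_sub_le _ _
      _ ≤ 2 * C := by linarith [hgC (A x), hgC x]
      _ ≤ 2 * C + _ := le_add_of_nonneg_right hsum
  · have hmem : m x ∈ Finset.Icc (-(M : ℤ)) M := Finset.mem_Icc.2 (abs_le.1 (not_lt.1 hx))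
    rw [Set.indicator_of_notMem (show x ∉ {x | (M : ℤ) < |m x|} from hx), zero_add, hAV x]
    exact Finset.single_le_sum (f := fun j => ‖g (V j x) - g x‖)
      (fun _ _ => norm_nonneg _) hmem

theorem tendsto_measure_lt_abs [IsFiniteMeasure μ] {n : X → ℤ} (hn : Measurable n) :
    Tendsto (fun M : ℕ => μ {x | (M : ℤ) < |n x|}) atTop (𝓝 0) := by
  have hempty : ⋂ M : ℕ, {x | (M : ℤ) < |n x|} = ∅ :=
    Set.eq_empty_of_forall_notMem fun x hx =>
      (Set.mem_iInter.1 hx (n x).natAbs).ne (Int.abs_eq_natAbs _).symm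
  have := tendsto_measure_iInter_atTop (μ := μ) (s := fun M : ℕ => {x | (M : ℤ) < |n x|})
    (fun M => (measurableSet_lt measurable_const hn.abs).nullMeasurableSet)
    (fun _ _ h _ hx => show (_ : ℤ) < _ from lt_of_le_of_lt (Nat.cast_le.2 h) hx)
    ⟨0, measure_ne_top μ _⟩
  rwa [hempty, measure_empty] at this

variable {T Tinv : X → X} {V : ℤ → X → X} {R : X → X} {n : X → ℤ}

theorem eLpNorm_conjMap_sub_le (hT : MeasurePreserving T μ μ)
    (hTinv : MeasurePreserving Tinv μ μ) (hV : ∀ j, MeasurePreserving (V j) μ μ)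
    (hn : Measurable n) (hRV : ∀ x, R x = V (n x) x) {g : X → E} (hg : AEStronglyMeasurable g μ)
    {C : ℝ} (hgC : ∀ x, ‖g x‖ ≤ C) (hp : 1 ≤ p) (M k : ℕ) :
    eLpNorm (fun x => g (conjMap T Tinv R k x) - g x) p μ ≤
      eLpNorm ({x | (M : ℤ) < |n x|}.indicator fun _ => 2 * C) p μ +
        ∑ j ∈ Finset.Icc (-(M : ℤ)) M,
          eLpNorm (fun x => g (conjMap T Tinv (V j) k x) - g x) p μ := by
  set tail : X → ℝ := {x | (M : ℤ) < |n x|}.indicator fun _ => 2 * C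
  have htail : AEStronglyMeasurable tail μ :=
    aestronglyMeasurable_const.indicator (measurableSet_lt measurable_const hn.abs)
  have hdisp : ∀ j, AEStronglyMeasurable (fun x => ‖g (conjMap T Tinv (V j) k x) - g x‖) μ :=
    fun j => ((hg.comp_measurePreserving (measurePreserving_conjMap hT hTinv (hV j) k)).sub hg).norm
  calc eLpNorm (fun x => g (conjMap T Tinv R k x) - g x) p μ
      ≤ eLpNorm (tail ∘ T^[k] + ∑ j ∈ Finset.Icc (-(M : ℤ)) M,
          fun x => ‖g (conjMap T Tinv (V j) k x) - g x‖) p μ := by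
        refine eLpNorm_mono_real fun x => ?_
        rw [Pi.add_apply, Finset.sum_apply]
        exact norm_sub_le_indicator_add_sum hgC (m := n ∘ T^[k])
          (fun x => by simp only [conjMap, Function.comp_apply, hRV]) M x
    _ ≤ eLpNorm (tail ∘ T^[k]) p μ + eLpNorm (∑ j ∈ Finset.Icc (-(M : ℤ)) M,
          fun x => ‖g (conjMap T Tinv (V j) k x) - g x‖) p μ :=
        eLpNorm_add_le (htail.comp_measurePreserving (hT.iterate k))
          (Finset.aestronglyMeasurable_sum _ fun j _ => hdisp j) hp
    _ ≤ eLpNorm tail p μ + ∑ j ∈ Finset.Icc (-(M : ℤ)) M,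
          eLpNorm (fun x => ‖g (conjMap T Tinv (V j) k x) - g x‖) p μ := by
        rw [eLpNorm_comp_measurePreserving htail (hT.iterate k)]
        gcongr
        exact eLpNorm_sum_le (fun j _ => hdisp j) hp
    _ = _ := by simp only [eLpNorm_norm, tail]

theorem tendsto_eLpNorm_conjMap_sub [IsFiniteMeasure μ] {L : Filter ℕ}
    (hT : MeasurePreserving T μ μ) (hTinv : MeasurePreserving Tinv μ μ)
    (hV : ∀ j, MeasurePreserving (V j) μ μ) (hn : Measurable n) (hRV : ∀ x, R x = V (n x) x)
    {g : X → E} (hg : AEStronglyMeasurable g μ) {C : ℝ} (hgC : ∀ x, ‖g x‖ ≤ C) (hp : 1 ≤ p)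
    (hp_top : p ≠ ∞)
    (hVg : ∀ j, Tendsto (fun k => eLpNorm (fun x => g (conjMap T Tinv (V j) k x) - g x) p μ)
      L (𝓝 0)) :
    Tendsto (fun k => eLpNorm (fun x => g (conjMap T Tinv R k x) - g x) p μ) L (𝓝 0) := by
  refine ENNReal.tendsto_nhds_zero_of_le_add (fun ε hε => ?_)
    (fun M => by simpa using tendsto_finsetSum _ fun j _ => hVg j)
    (eLpNorm_conjMap_sub_le hT hTinv hV hn hRV hg hgC hp)
  have hp0 : p ≠ 0 := (zero_lt_one.trans_le hp).ne'
  have hexp : 0 < 1 / p.toReal := one_div_pos.2 (ENNReal.toReal_pos hp0 hp_top)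
  obtain ⟨M, hM⟩ := (((ENNReal.tendsto_const_mul_rpow_nhds_zero_of_pos
    (c := ‖2 * C‖ₑ) enorm_ne_top hexp).comp
    (tendsto_measure_lt_abs (μ := μ) hn)).eventually_lt_const hε).exists
  exact ⟨M, by
    rwa [eLpNorm_indicator_const (measurableSet_lt measurable_const hn.abs) hp0 hp_top]⟩

end Gluing

theorem homoclinicAlong_of_simpleFunc {μ : Measure X} {T Tinv R : X → X} {L : Filter ℕ}
    (hR : ∀ k, MeasurePreserving (conjMap T Tinv R k) μ μ)
    (h : ∀ g : SimpleFunc X ℝ,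
      Tendsto (fun k => eLpNorm (fun x => g (conjMap T Tinv R k x) - g x) 2 μ) L (𝓝 0)) :
    HomoclinicAlong μ T Tinv R L := by
  intro f hf
  refine ENNReal.tendsto_nhds_zero_of_le_add
    (b := fun g : SimpleFunc X ℝ => 2 * eLpNorm (f - ⇑g) 2 μ) (fun ε hε => ?_) h
    fun g k => eLpNorm_comp_sub_le_two_mul_add (hR k) hf.1 g.aestronglyMeasurable one_le_two
  obtain ⟨g, hfg, -⟩ :=
    hf.exists_simpleFunc_eLpNorm_sub_lt ENNReal.ofNat_ne_top (ENNReal.half_pos hε.ne').ne'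
  exact ⟨g, mul_comm (2 : ℝ≥0∞) _ ▸ ENNReal.mul_lt_of_lt_div hfg⟩

theorem homoclinicAlongP_is_full_general (μ : Measure X) [IsProbabilityMeasure μ]
    (T Tinv : X → X) (hT : MeasurePreserving T μ μ) (hTinv : MeasurePreserving Tinv μ μ)
    (hTl : Function.LeftInverse Tinv T) (hTr : Function.RightInverse Tinv T)
    (P : Set ℕ)
    (S Sinv : X → X) (hS : MeasurePreserving S μ μ) (hSinv : MeasurePreserving Sinv μ μ)
    (hSl : Function.LeftInverse Sinv S)
    (hSH : HomoclinicAlong μ T Tinv S (atTop ⊓ 𝓟 P))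
    (R : X → X) (hR : InvMP μ R)
    (n : X → ℤ) (hn : Measurable n) (hRS : ∀ x, R x = zIter S Sinv (n x) x) :
    HomoclinicAlong μ T Tinv R (atTop ⊓ 𝓟 P) := by
  refine homoclinicAlong_of_simpleFunc (measurePreserving_conjMap hT hTinv hR.1) fun g => ?_
  obtain ⟨C, hgC⟩ := g.exists_forall_norm_le
  exact tendsto_eLpNorm_conjMap_sub hT hTinv (measurePreserving_zIter hS hSinv) hn hRS
    g.aestronglyMeasurable hgC one_le_two ENNReal.ofNat_ne_top fun j =>
      hSH.zIter hT hTinv hTl hTr hS hSinv hSl j g (g.memLp_of_isFiniteMeasure 2 μ)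

/-- `H_P(T)` is a full group: if `S ∈ H_P(T)` and the invertible measure-preserving `R`
satisfies `R x = S^{n x} x` for a measurable `n : X → ℤ`, then `R ∈ H_P(T)`. -/
theorem homoclinicAlongP_is_full (μ : Measure X) [IsProbabilityMeasure μ]
    (T Tinv : X → X) (hT : MeasurePreserving T μ μ) (hTinv : MeasurePreserving Tinv μ μ)
    (hTl : Function.LeftInverse Tinv T) (hTr : Function.RightInverse Tinv T)
    (P : Set ℕ) (hP : P.Infinite)
    (S Sinv : X → X) (hS : MeasurePreserving S μ μ) (hSinv : MeasurePreserving Sinv μ μ)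
    (hSl : Function.LeftInverse Sinv S) (hSr : Function.RightInverse Sinv S)
    (hSH : HomoclinicAlong μ T Tinv S (atTop ⊓ 𝓟 P))
    (R : X → X) (hR : InvMP μ R)
    (n : X → ℤ) (hn : Measurable n) (hRS : ∀ x, R x = zIter S Sinv (n x) x) :
    HomoclinicAlong μ T Tinv R (atTop ⊓ 𝓟 P) :=
  homoclinicAlongP_is_full_general μ T Tinv hT hTinv hTl hTr P S Sinv hS hSinv hSl hSH R hR n hn hRS
end

section
/- If T is an ergodic measure-preserving transformation of an infinite σ-finite measure space (X, μ) and F is an invertible measure-preserving transformation that equals the identity outside a set of finite measure, then (1/N) Σ_{n=1}^N U_{T^{-n} F T^n} → I strongly on L²(X, μ) as N → ∞; i.e., F is weakly homoclinic for T. -/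
open MeasureTheory Filter Topology

variable {X : Type*} [MeasurableSpace X]

/-- `S` is weakly homoclinic for `T` : the Cesàro averages `(1/N) Σ_{n=1}^N U_{T^{-n}ST^n}`
converge strongly to the identity on `L²(X, μ)`. -/
def WeakHomoclinic (μ : Measure X) (T Tinv S : X → X) : Prop :=
  ∀ f : X → ℝ, MemLp f 2 μ →
    Tendsto (fun N : ℕ => eLpNorm
        (fun x => (N : ℝ)⁻¹ • (∑ n ∈ Finset.Icc 1 N, f (conjMap T Tinv S n x)) - f x) 2 μ)
      atTop (𝓝 0)

/-!
Choose a measurable `A ⊇ {F ≠ id}` of finite measure. The map `T^{-n} F T^n` moves only points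
of `T^{-n} A`, so for `g` bounded by `M` the defect `(1/N) Σ g ∘ T^{-n} F T^n - g` at `x` is at
most `2M` times the Birkhoff average of `1_A` along the orbit of `T x`. By the mean ergodic
theorem these Birkhoff averages converge in `L²` to an invariant function, which is a.e. constant
by ergodicity and hence `0` because `μ` is infinite. The averaging operators are contractions of
`L²`, so the convergence passes from simple functions to all of `L²`.
-/

open Function

namespace MeasureTheory.Lp

variable {μ : Measure X} {E : Type*} [NormedAddCommGroup E] {p : ENNReal} {T : X → X}

theorem coeFn_birkhoffSum_compMeasurePreserving (hT : MeasurePreserving T μ μ) (g : Lp E p μ)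
    (n : ℕ) :
    (birkhoffSum (compMeasurePreserving T hT) id n g : Lp E p μ) =ᵐ[μ] birkhoffSum T g n := by
  induction n with
  | zero => simpa using coeFn_zero E p μ
  | succ n ih =>
    rw [birkhoffSum_succ, id, compMeasurePreserving_iterate]
    filter_upwards [coeFn_add (birkhoffSum (compMeasurePreserving T hT) id n g) _, ih,
      coeFn_compMeasurePreserving g (hT.iterate n)] with x hadd hih hcomp
    rw [hadd, Pi.add_apply, hih, hcomp, birkhoffSum_succ, comp_apply]

theorem coeFn_birkhoffAverage_compMeasurePreserving [NormedSpace ℝ E] [Fact (1 ≤ p)]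
    (hT : MeasurePreserving T μ μ) (g : Lp E p μ) (n : ℕ) :
    (birkhoffAverage ℝ (compMeasurePreserving T hT) id n g : Lp E p μ) =ᵐ[μ]
      birkhoffAverage ℝ T g n := by
  filter_upwards [coeFn_smul (n : ℝ)⁻¹ (birkhoffSum (compMeasurePreserving T hT) id n g),
    coeFn_birkhoffSum_compMeasurePreserving hT g n] with x hsmul hsum
  rw [birkhoffAverage, hsmul, Pi.smul_apply, hsum]
  rfl

end MeasureTheory.Lp

namespace Ergodic

variable {μ : Measure X} {T : X → X} {E : Type*} [NormedAddCommGroup E]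

theorem Lp_eq_zero_of_compMeasurePreserving_eq {p : ENNReal} (hp₀ : p ≠ 0) (hp : p ≠ ⊤)
    (hT : Ergodic T μ) (hμ : μ Set.univ = ⊤) {g : Lp E p μ}
    (hg : Lp.compMeasurePreserving T hT.toMeasurePreserving g = g) : g = 0 := by
  have hinv : (g : X → E) ∘ T =ᵐ[μ] g :=
    (Lp.coeFn_compMeasurePreserving g _).symm.trans (by rw [hg])
  obtain ⟨c, hc⟩ := hT.ae_eq_const_of_ae_eq_comp_ae (Lp.aestronglyMeasurable g) hinv
  obtain rfl : c = 0 := by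
    by_contra hc0
    have : eLpNorm (g : X → E) p μ = ⊤ := by
      rw [eLpNorm_congr_ae hc]
      refine (eLpNorm_const' c hp₀ hp).trans ?_
      rw [hμ]
      simp [hc0, ENNReal.top_rpow_of_pos, ENNReal.toReal_pos hp₀ hp]
    exact (Lp.eLpNorm_lt_top g).ne this
  exact Lp.ext (hc.trans (Lp.coeFn_zero E p μ).symm)

theorem tendsto_eLpNorm_birkhoffAverage_zero [InnerProductSpace ℝ E] [CompleteSpace E]
    (hT : Ergodic T μ) (hμ : μ Set.univ = ⊤) {f : X → E} (hf : MemLp f 2 μ) :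
    Tendsto (fun N => eLpNorm (birkhoffAverage ℝ T f N) 2 μ) atTop (𝓝 0) := by
  have hTm := hT.toMeasurePreserving
  set U := (Lp.compMeasurePreservingₗᵢ ℝ T hTm : Lp E 2 μ →ₗᵢ[ℝ] Lp E 2 μ).toContinuousLinearMap
  have hU : ‖U‖ ≤ 1 := U.opNorm_le_bound zero_le_one fun g => by simp [U]
  set P := (U.eqLocus (1 : Lp E 2 μ →L[ℝ] Lp E 2 μ)).orthogonalProjectionOnto
  have hfix : (P (hf.toLp f) : Lp E 2 μ) = 0 :=
    hT.Lp_eq_zero_of_compMeasurePreserving_eq two_ne_zero ENNReal.ofNat_ne_top hμ (P _).2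
  have hmean := U.tendsto_birkhoffAverage_orthogonalProjection hU (hf.toLp f)
  rw [hfix] at hmean
  have := (continuous_enorm.tendsto 0).comp hmean
  rw [enorm_zero] at this
  refine this.congr fun N => ?_
  rw [comp_apply, Lp.enorm_def]
  exact eLpNorm_congr_ae ((Lp.coeFn_birkhoffAverage_compMeasurePreserving hTm _ N).trans
    (hTm.quasiMeasurePreserving.birkhoffAverage_ae_eq_of_ae_eq ℝ hf.coeFn_toLp N))

end Ergodic

section CesaroComp

variable {μ : Measure X} {E : Type*} [NormedAddCommGroup E] [NormedSpace ℝ E]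
  {φ : ℕ → X → X} {p : ENNReal}

noncomputable def cesaroComp (φ : ℕ → X → X) (f : X → E) (N : ℕ) : X → E :=
  fun x => (N : ℝ)⁻¹ • ∑ n ∈ Finset.Icc 1 N, f (φ n x)

omit [MeasurableSpace X] in
theorem cesaroComp_sub (f g : X → E) (N : ℕ) :
    cesaroComp φ (f - g) N = cesaroComp φ f N - cesaroComp φ g N := by
  ext x
  simp [cesaroComp, Finset.sum_sub_distrib, smul_sub]

theorem MeasureTheory.AEStronglyMeasurable.cesaroComp (hφ : ∀ n, MeasurePreserving (φ n) μ μ)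
    {f : X → E} (hf : AEStronglyMeasurable f μ) (N : ℕ) :
    AEStronglyMeasurable (cesaroComp φ f N) μ :=
  (Finset.aestronglyMeasurable_fun_sum _ fun n _ =>
    hf.comp_quasiMeasurePreserving (hφ n).quasiMeasurePreserving).const_smul _

theorem eLpNorm_cesaroComp_le (hφ : ∀ n, MeasurePreserving (φ n) μ μ) (hp : 1 ≤ p) {f : X → E}
    (hf : AEStronglyMeasurable f μ) (N : ℕ) :
    eLpNorm (cesaroComp φ f N) p μ ≤ eLpNorm f p μ := by
  have hsum : eLpNorm (∑ n ∈ Finset.Icc 1 N, fun x => f (φ n x)) p μ ≤ N * eLpNorm f p μ :=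
    calc eLpNorm (∑ n ∈ Finset.Icc 1 N, fun x => f (φ n x)) p μ
        ≤ ∑ n ∈ Finset.Icc 1 N, eLpNorm (fun x => f (φ n x)) p μ :=
          eLpNorm_sum_le
            (fun n _ => hf.comp_quasiMeasurePreserving (hφ n).quasiMeasurePreserving) hp
      _ = ∑ n ∈ Finset.Icc 1 N, eLpNorm f p μ :=
          Finset.sum_congr rfl fun n _ => eLpNorm_comp_measurePreserving hf (hφ n)
      _ = N * eLpNorm f p μ := by simp
  have hN : ‖(N : ℝ)⁻¹‖ₑ * N ≤ 1 := by
    rcases N.eq_zero_or_pos with rfl | hN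
    · simp
    · rw [enorm_inv (by positivity), Real.enorm_natCast,
        ENNReal.inv_mul_cancel (by simpa using hN.ne') (ENNReal.natCast_ne_top N)]
  calc eLpNorm (cesaroComp φ f N) p μ
      = ‖(N : ℝ)⁻¹‖ₑ * eLpNorm (∑ n ∈ Finset.Icc 1 N, fun x => f (φ n x)) p μ := by
        rw [← eLpNorm_const_smul]
        congr 1
        ext x
        simp [cesaroComp]
    _ ≤ ‖(N : ℝ)⁻¹‖ₑ * N * eLpNorm f p μ := by
        rw [mul_assoc]; gcongr
    _ ≤ eLpNorm f p μ := by
        simpa using mul_le_mul_left hN (eLpNorm f p μ)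

theorem eLpNorm_cesaroComp_sub_self_le (hφ : ∀ n, MeasurePreserving (φ n) μ μ) (hp : 1 ≤ p)
    {f g : X → E} (hf : AEStronglyMeasurable f μ) (hg : AEStronglyMeasurable g μ) (N : ℕ) :
    eLpNorm (cesaroComp φ f N - f) p μ ≤
      eLpNorm (cesaroComp φ g N - g) p μ + 2 * eLpNorm (f - g) p μ := by
  have hfg := hf.sub hg
  have hsplit :
      cesaroComp φ f N - f = cesaroComp φ (f - g) N + (cesaroComp φ g N - g) - (f - g) := by
    rw [cesaroComp_sub]; abel
  rw [hsplit]
  calc eLpNorm (cesaroComp φ (f - g) N + (cesaroComp φ g N - g) - (f - g)) p μ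
      ≤ eLpNorm (cesaroComp φ (f - g) N) p μ + eLpNorm (cesaroComp φ g N - g) p μ
          + eLpNorm (f - g) p μ :=
        (eLpNorm_sub_le ((hfg.cesaroComp hφ N).add ((hg.cesaroComp hφ N).sub hg)) hfg hp).trans
          (add_le_add_left
            (eLpNorm_add_le (hfg.cesaroComp hφ N) ((hg.cesaroComp hφ N).sub hg) hp) _)
    _ ≤ eLpNorm (f - g) p μ + eLpNorm (cesaroComp φ g N - g) p μ + eLpNorm (f - g) p μ := by
        gcongr; exact eLpNorm_cesaroComp_le hφ hp hfg N
    _ = eLpNorm (cesaroComp φ g N - g) p μ + 2 * eLpNorm (f - g) p μ := by ring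

theorem tendsto_eLpNorm_cesaroComp_sub_self (hφ : ∀ n, MeasurePreserving (φ n) μ μ)
    (hp₁ : 1 ≤ p) (hp : p ≠ ⊤)
    (h : ∀ g : SimpleFunc X E,
      Tendsto (fun N => eLpNorm (cesaroComp φ g N - ⇑g) p μ) atTop (𝓝 0))
    {f : X → E} (hf : MemLp f p μ) :
    Tendsto (fun N => eLpNorm (cesaroComp φ f N - f) p μ) atTop (𝓝 0) := by
  rw [ENNReal.tendsto_nhds_zero]
  intro ε hε
  have hε₂ : ε / 2 ≠ 0 := (ENNReal.half_pos hε.ne').ne'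
  obtain ⟨g, hfg, -⟩ := hf.exists_simpleFunc_eLpNorm_sub_lt hp (ENNReal.half_pos hε₂).ne'
  filter_upwards [ENNReal.tendsto_nhds_zero.1 (h g) _ (ENNReal.half_pos hε.ne')] with N hN
  calc eLpNorm (cesaroComp φ f N - f) p μ
      ≤ eLpNorm (cesaroComp φ g N - ⇑g) p μ + 2 * eLpNorm (f - ⇑g) p μ :=
        eLpNorm_cesaroComp_sub_self_le hφ hp₁ hf.1 g.aestronglyMeasurable N
    _ ≤ ε / 2 + 2 * (ε / 2 / 2) := by gcongr
    _ = ε := by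
        rw [ENNReal.mul_div_cancel two_ne_zero ENNReal.ofNat_ne_top, ENNReal.add_halves]

end CesaroComp

section Homoclinic

variable {μ : Measure X} {T Tinv F : X → X} {E : Type*} [NormedAddCommGroup E] [NormedSpace ℝ E]

theorem conjMap_measurePreserving (hT : MeasurePreserving T μ μ)
    (hTinv : MeasurePreserving Tinv μ μ) (hF : MeasurePreserving F μ μ) (n : ℕ) :
    MeasurePreserving (conjMap T Tinv F n) μ μ :=
  (hTinv.iterate n).comp (hF.comp (hT.iterate n))

omit [MeasurableSpace X] in
theorem conjMap_eq_self (hTl : LeftInverse Tinv T) {A : Set X} (hAF : ∀ x ∉ A, F x = x)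
    {n : ℕ} {x : X} (hx : T^[n] x ∉ A) : conjMap T Tinv F n x = x := by
  rw [conjMap, hAF _ hx, hTl.iterate n]

omit [MeasurableSpace X] in
theorem norm_cesaroComp_conjMap_sub_le (hTl : LeftInverse Tinv T) {A : Set X}
    (hAF : ∀ x ∉ A, F x = x) {g : X → E} {M : ℝ} (hM : ∀ x, ‖g x‖ ≤ M) {N : ℕ} (hN : N ≠ 0)
    (x : X) :
    ‖cesaroComp (conjMap T Tinv F) g N x - g x‖ ≤
      2 * M * birkhoffAverage ℝ T (A.indicator 1) N (T x) := by
  have hterm : ∀ n, ‖g (conjMap T Tinv F n x) - g x‖ ≤ 2 * M * A.indicator 1 (T^[n] x) := by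
    intro n
    by_cases hx : T^[n] x ∈ A
    · simpa [hx, two_mul] using (norm_sub_le _ _).trans (add_le_add (hM _) (hM _))
    · simp [hx, conjMap_eq_self hTl hAF hx]
  have hshift : ∑ n ∈ Finset.Icc 1 N, A.indicator (1 : X → ℝ) (T^[n] x) =
      birkhoffSum T (A.indicator 1) N (T x) := by
    rw [← Finset.Ico_add_one_right_eq_Icc, Finset.sum_Ico_eq_sum_range, birkhoffSum]
    simp [add_comm 1, iterate_succ_apply]
  have hsub : cesaroComp (conjMap T Tinv F) g N x - g x =
      (N : ℝ)⁻¹ • ∑ n ∈ Finset.Icc 1 N, (g (conjMap T Tinv F n x) - g x) := by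
    simp [cesaroComp, Finset.sum_sub_distrib, smul_sub, ← Nat.cast_smul_eq_nsmul ℝ, smul_smul,
      hN]
  calc ‖cesaroComp (conjMap T Tinv F) g N x - g x‖
      ≤ (N : ℝ)⁻¹ * ∑ n ∈ Finset.Icc 1 N, ‖g (conjMap T Tinv F n x) - g x‖ := by
        rw [hsub, norm_smul, Real.norm_of_nonneg (by positivity)]
        gcongr
        exact norm_sum_le _ _
    _ ≤ (N : ℝ)⁻¹ * ∑ n ∈ Finset.Icc 1 N, 2 * M * A.indicator 1 (T^[n] x) := by
        gcongr with n; exact hterm n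
    _ = 2 * M * birkhoffAverage ℝ T (A.indicator 1) N (T x) := by
        rw [← Finset.mul_sum, hshift, birkhoffAverage, smul_eq_mul]
        ring

theorem tendsto_eLpNorm_cesaroComp_conjMap_sub_self_of_bounded (hT : Ergodic T μ)
    (hμ : μ Set.univ = ⊤) (hTl : LeftInverse Tinv T) {A : Set X} (hA : MeasurableSet A)
    (hAμ : μ A ≠ ⊤) (hAF : ∀ x ∉ A, F x = x) {g : X → E} {M : ℝ} (hM : ∀ x, ‖g x‖ ≤ M) :
    Tendsto (fun N => eLpNorm (cesaroComp (conjMap T Tinv F) g N - g) 2 μ) atTop (𝓝 0) := by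
  have hTm := hT.toMeasurePreserving
  set χ : X → ℝ := A.indicator 1
  have hχ : Measurable χ := measurable_one.indicator hA
  have hmeas (N : ℕ) : AEStronglyMeasurable (birkhoffAverage ℝ T χ N) μ := by
    unfold birkhoffAverage birkhoffSum
    exact ((Finset.measurable_fun_sum _ fun k _ =>
      hχ.comp (hTm.measurable.iterate k)).const_smul (N : ℝ)⁻¹).aestronglyMeasurable
  have hbound : ∀ᶠ N in atTop, eLpNorm (cesaroComp (conjMap T Tinv F) g N - g) 2 μ ≤
      ‖2 * M‖ₑ * eLpNorm (birkhoffAverage ℝ T χ N) 2 μ := by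
    filter_upwards [eventually_ne_atTop 0] with N hN
    calc eLpNorm (cesaroComp (conjMap T Tinv F) g N - g) 2 μ
        ≤ eLpNorm ((2 * M) • (birkhoffAverage ℝ T χ N ∘ T)) 2 μ :=
          eLpNorm_mono fun x =>
            (norm_cesaroComp_conjMap_sub_le hTl hAF hM hN x).trans (Real.le_norm_self _)
      _ = ‖2 * M‖ₑ * eLpNorm (birkhoffAverage ℝ T χ N) 2 μ := by
          rw [eLpNorm_const_smul, eLpNorm_comp_measurePreserving (hmeas N) hTm]
  have hmean := ENNReal.Tendsto.const_mul
    (hT.tendsto_eLpNorm_birkhoffAverage_zero hμ (memLp_indicator_const 2 hA (1 : ℝ) (Or.inr hAμ)))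
    (Or.inr (enorm_ne_top (x := 2 * M)))
  rw [mul_zero] at hmean
  exact tendsto_of_tendsto_of_tendsto_of_le_of_le' tendsto_const_nhds hmean
    (Eventually.of_forall fun _ => zero_le) hbound

end Homoclinic

theorem finite_support_is_weakly_homoclinic_general (μ : Measure X)
    (hμ : μ Set.univ = ⊤)
    (T Tinv : X → X) (hT : Ergodic T μ) (hTinv : MeasurePreserving Tinv μ μ)
    (hTl : Function.LeftInverse Tinv T)
    (F : X → X) (hF : InvMP μ F) (hFsupp : μ {x | F x ≠ x} < ⊤) :
    WeakHomoclinic μ T Tinv F := by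
  intro f hf
  obtain ⟨A, hFA, hA, hAμ⟩ := exists_measurable_superset μ {x | F x ≠ x}
  have hAF : ∀ x ∉ A, F x = x := fun x hx => not_not.1 fun h => hx (hFA h)
  refine tendsto_eLpNorm_cesaroComp_sub_self
    (conjMap_measurePreserving hT.toMeasurePreserving hTinv hF.1) one_le_two
    ENNReal.ofNat_ne_top (fun g => ?_) hf
  obtain ⟨M, hM⟩ := g.exists_forall_norm_le
  exact tendsto_eLpNorm_cesaroComp_conjMap_sub_self_of_bounded hT hμ hTl hA (hAμ ▸ hFsupp.ne)
    hAF hM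

/-- If `T` is an ergodic invertible measure-preserving transformation of an infinite
σ-finite measure space and the invertible measure-preserving `F` equals the identity
outside a set of finite measure, then `F` is weakly homoclinic for `T`. -/
theorem finite_support_is_weakly_homoclinic (μ : Measure X) [SigmaFinite μ]
    (hμ : μ Set.univ = ⊤)
    (T Tinv : X → X) (hT : Ergodic T μ) (hTinv : MeasurePreserving Tinv μ μ)
    (hTl : Function.LeftInverse Tinv T) (hTr : Function.RightInverse Tinv T)
    (F : X → X) (hF : InvMP μ F) (hFsupp : μ {x | F x ≠ x} < ⊤) :
    WeakHomoclinic μ T Tinv F :=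
  finite_support_is_weakly_homoclinic_general μ hμ T Tinv hT hTinv hTl F hF hFsupp
end
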